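/- (Theorem 4, quadratic convergence of exact DPO-Mix-P.) Suppose θ^(0) = 0 and the parameters evolve by the exact DPO-Mix-P update with learning rate η = 1/(β²A): θ^(t+1)_a = θ^(t)_a + (1/(βA)) Σ_{a'∈𝒴} Δ(a,a';θ^(t)) / σ'(β(θ^(t)_a − θ^(t)_{a'})) for every a ∈ 𝒴. Then for every number of iterations T ∈ ℕ and all a, a' ∈ 𝒴, |δ(a,a';θ^(T))| ≤ 0.611^(2^T − 1). -/

import Mathlib

/-- The sigmoid function. -/
noncomputable def sig (x : ℝ) : ℝ := 1 / (1 + Real.exp (-x))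

/-- The derivative of the sigmoid function. -/
noncomputable def sig' (x : ℝ) : ℝ := sig x * (1 - sig x)

/-!
Each coordinate of the DPO-Mix-P update averages over `b` the Newton steps for the equations
`σ(β(θ_a - θ_b)) = σ(r_a - r_b)`. Since `δ(a,b) - δ(a',b) = δ(a,a')`, the new error `δ(a,a')` is the
average over `b` of differences of Newton residuals, and as `|σ''| ≤ 1/10` each residual is at most
`δ² / (20 σ'(v))`. Hence `|δ_{t+1}| ≤ δ_t² / (10 σ'(V))` whenever `|β(θ_a - θ_{a'})| ≤ V`, and
`V ≤ 1 + max |δ_t|` because the rewards lie in `[0, 1]`. Starting from `θ⁰ = 0` (so `V = 0`) this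
gives `|δ₁| ≤ 2/5`, then `|δ₂| ≤ 0.162 ≤ 0.611³`, and from then on `V ≤ 5/4`, where
`1/(10 σ'(5/4)) ≤ 0.611`, so that `|δ_{t+1}| ≤ 0.611 δ_t²`.
-/

open Real Finset

theorem sig_eq_sigmoid : sig = sigmoid := funext fun _ => one_div _

theorem sig'_eq (x : ℝ) : sig' x = sigmoid x * (1 - sigmoid x) := by
  rw [sig', sig_eq_sigmoid]

theorem sig'_pos (x : ℝ) : 0 < sig' x := by
  rw [sig'_eq]
  exact mul_pos (sigmoid_pos x) (sub_pos.2 (sigmoid_lt_one x))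

theorem hasDerivAt_sig (x : ℝ) : HasDerivAt sig (sig' x) x := by
  rw [sig_eq_sigmoid, sig'_eq]
  exact hasDerivAt_sigmoid x

theorem hasDerivAt_sig' (x : ℝ) : HasDerivAt sig' (sig' x * (1 - 2 * sig x)) x :=
  ((hasDerivAt_sig x).mul ((hasDerivAt_sig x).const_sub 1)).congr_deriv (by rw [sig']; ring)

theorem abs_sig'_mul_one_sub_two_sig_le (x : ℝ) : |sig' x * (1 - 2 * sig x)| ≤ 1 / 10 := by
  have h0 : 0 < sig x := sig_eq_sigmoid ▸ sigmoid_pos x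
  have h1 : sig x < 1 := sig_eq_sigmoid ▸ sigmoid_lt_one x
  set s := sig x
  rw [sig', abs_le]
  -- `s(1-s)(1-2s)` has extrema `±1/(6√3) ≈ ±0.096` at `s = (1 ∓ 1/√3)/2 ≈ 0.21, 0.79`
  constructor
  · nlinarith [sq_nonneg (s - 1 / 2), sq_nonneg (s - 4 / 5), sq_nonneg (s - 79 / 100),
      sq_nonneg (s * (1 - s))]
  · nlinarith [sq_nonneg (s - 1 / 2), sq_nonneg (s - 1 / 5), sq_nonneg (s - 21 / 100),
      sq_nonneg (s * (1 - s))]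

theorem abs_sig'_sub_sig'_le (x y : ℝ) : |sig' x - sig' y| ≤ 1 / 10 * |x - y| := by
  simpa only [Real.norm_eq_abs] using Convex.norm_image_sub_le_of_norm_hasDerivWithin_le
    (fun z _ => (hasDerivAt_sig' z).hasDerivWithinAt)
    (fun z _ => (Real.norm_eq_abs _).trans_le (abs_sig'_mul_one_sub_two_sig_le z))
    convex_univ (Set.mem_univ y) (Set.mem_univ x)

theorem sig'_le_sig'_of_abs_le {v V : ℝ} (hv : |v| ≤ V) : sig' V ≤ sig' v := by
  have hlo : 1 - sigmoid V ≤ sigmoid v := sigmoid_neg V ▸ sigmoid_le (neg_le_of_abs_le hv)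
  have hhi : sigmoid v ≤ sigmoid V := sigmoid_le (le_of_abs_le hv)
  rw [sig'_eq, sig'_eq]
  nlinarith [mul_nonneg (sub_nonneg.2 hhi) (sub_nonneg.2 hlo)]

theorem sig'_log {c : ℝ} (hc : 0 < c) : sig' (log c) = c / (1 + c) ^ 2 := by
  rw [sig', sig, exp_neg, exp_log hc]
  field_simp
  ring

theorem sig'_zero : sig' 0 = 1 / 4 := by
  norm_num [sig'_eq]

theorem abs_sub_sub_mul_sub_le_of_le {f f' : ℝ → ℝ} {L u v : ℝ}
    (hf : ∀ x, HasDerivAt f (f' x) x) (hL : ∀ x, |f' x - f' v| ≤ L * |x - v|) (hvu : v ≤ u) :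
    |f u - f v - f' v * (u - v)| ≤ L / 2 * (u - v) ^ 2 := by
  have hg : ∀ x, HasDerivAt (fun x => f x - f v - f' v * (x - v)) (f' x - f' v) x := fun x =>
    (((hf x).sub_const (f v)).sub (((hasDerivAt_id' x).sub_const v).const_mul (f' v))).congr_deriv
      (by ring)
  have hB : ∀ x, HasDerivAt (fun x => L / 2 * (x - v) ^ 2) (L * (x - v)) x := fun x =>
    ((((hasDerivAt_id' x).sub_const v).pow 2).const_mul (L / 2)).congr_deriv (by ring)
  refine image_norm_le_of_norm_deriv_right_le_deriv_boundary
    (fun x _ => (hg x).continuousAt.continuousWithinAt) (fun x _ => (hg x).hasDerivWithinAt)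
    (by simp) hB (fun x hx => ?_) (Set.right_mem_Icc.2 hvu)
  rw [Real.norm_eq_abs, ← abs_of_nonneg (sub_nonneg.2 hx.1)]
  exact hL x

theorem abs_sub_sub_mul_sub_le {f f' : ℝ → ℝ} {L : ℝ}
    (hf : ∀ x, HasDerivAt f (f' x) x) (hL : ∀ x y, |f' x - f' y| ≤ L * |x - y|) (u v : ℝ) :
    |f u - f v - f' v * (u - v)| ≤ L / 2 * (u - v) ^ 2 := by
  rcases le_total v u with hvu | huv
  · exact abs_sub_sub_mul_sub_le_of_le hf (fun x => hL x v) hvu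
  · have hneg : ∀ x, HasDerivAt (fun x => f (-x)) (-f' (-x)) x := fun x =>
      ((hf (-x)).comp x (hasDerivAt_neg x)).congr_deriv (by ring)
    have := abs_sub_sub_mul_sub_le_of_le hneg (v := -v) (L := L)
      (fun x => by simpa [abs_sub_comm, neg_add_eq_sub, ← abs_neg (x + v)] using hL (-x) v)
      (neg_le_neg huv)
    convert this using 2 <;> ring_nf

theorem abs_sig_sub_sig_sub_le (u v : ℝ) :
    |sig u - sig v - sig' v * (u - v)| ≤ 1 / 20 * (u - v) ^ 2 := by
  have := abs_sub_sub_mul_sub_le hasDerivAt_sig abs_sig'_sub_sig'_le u v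
  norm_num at this ⊢
  exact this

theorem div_one_add_sq_le_sig' {c x : ℝ} (hc : 0 < c) (hx : exp |x| ≤ c) :
    c / (1 + c) ^ 2 ≤ sig' x :=
  sig'_log hc ▸ sig'_le_sig'_of_abs_le ((le_log_iff_exp_le hc).2 hx)

theorem exp_two_lt_eight : exp 2 < 8 := by
  have h := exp_one_lt_d9
  have h2 : exp 2 = exp 1 ^ 2 := by rw [← exp_nat_mul]; norm_num
  rw [h2]
  nlinarith [exp_pos 1]

theorem exp_five_quarters_lt : exp (5 / 4) < 7 / 2 := by
  have h4 : exp (5 / 4) ^ 4 = exp 1 ^ 5 := by rw [← exp_nat_mul, ← exp_nat_mul]; norm_num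
  refine lt_of_pow_lt_pow_left₀ 4 (by norm_num) ?_
  rw [h4]
  calc exp 1 ^ 5 < 2.7182818286 ^ 5 := by gcongr; exact exp_one_lt_d9
    _ < (7 / 2) ^ 4 := by norm_num

theorem le_sig'_two : 8 / 81 ≤ sig' 2 := by
  have := div_one_add_sq_le_sig' (c := 8) (x := 2) (by norm_num)
    (by rw [abs_of_pos two_pos]; exact exp_two_lt_eight.le)
  norm_num at this ⊢
  exact this

theorem le_sig'_five_div_four : 14 / 81 ≤ sig' (5 / 4) := by
  have := div_one_add_sq_le_sig' (c := 7 / 2) (x := 5 / 4) (by norm_num)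
    (by rw [abs_of_pos (by norm_num)]; exact exp_five_quarters_lt.le)
  norm_num at this ⊢
  exact this

noncomputable def newtonResidual (u v : ℝ) : ℝ := u - v - (sig u - sig v) / sig' v

theorem abs_newtonResidual_le {u v B V : ℝ} (hv : |v| ≤ V) (huv : |u - v| ≤ B) :
    |newtonResidual u v| ≤ 1 / 20 / sig' V * B ^ 2 := by
  have hres : newtonResidual u v = -(sig u - sig v - sig' v * (u - v)) / sig' v := by
    rw [newtonResidual]
    field_simp [(sig'_pos v).ne']
    ring
  have hB : (u - v) ^ 2 ≤ B ^ 2 := sq_le_sq' (neg_le_of_abs_le huv) (le_of_abs_le huv)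
  rw [hres, abs_div, abs_neg, abs_of_pos (sig'_pos v)]
  calc _ ≤ 1 / 20 * B ^ 2 / sig' v :=
        div_le_div_of_nonneg_right ((abs_sig_sub_sig_sub_le u v).trans (by gcongr)) (sig'_pos v).le
    _ ≤ 1 / 20 * B ^ 2 / sig' V :=
        div_le_div_of_nonneg_left (by positivity) (sig'_pos V) (sig'_le_sig'_of_abs_le hv)
    _ = 1 / 20 / sig' V * B ^ 2 := by ring

theorem mul_sq_pow_two_pow_sub_one {M : Type*} [Monoid M] (x : M) (n : ℕ) :
    x * (x ^ (2 ^ n - 1)) ^ 2 = x ^ (2 ^ (n + 1) - 1) := by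
  have h : 2 ^ (n + 1) - 1 = (2 ^ n - 1) * 2 + 1 := by
    have := Nat.one_le_two_pow (n := n)
    rw [pow_succ]
    omega
  rw [h, pow_succ' x, pow_mul]

section DPOMixP

variable {Y : Type*}

def rewardGapError (r : Y → ℝ) (β : ℝ) (θ : Y → ℝ) (a a' : Y) : ℝ :=
  r a - r a' - β * (θ a - θ a')

theorem abs_sub_le_one_of_mem_unit {r : Y → ℝ} (hr : ∀ a, 0 ≤ r a ∧ r a ≤ 1) (a a' : Y) :
    |r a - r a'| ≤ 1 := by
  simpa using abs_sub_le_of_le_of_le (hr a).1 (hr a).2 (hr a').1 (hr a').2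

theorem abs_mul_sub_le_one_add {r : Y → ℝ} {β : ℝ} (hr : ∀ a, 0 ≤ r a ∧ r a ≤ 1) {θ : Y → ℝ}
    {B : ℝ} (hB : ∀ a a', |rewardGapError r β θ a a'| ≤ B) (a a' : Y) :
    |β * (θ a - θ a')| ≤ 1 + B := by
  have hr' := abs_sub_le_one_of_mem_unit hr a a'
  calc |β * (θ a - θ a')| = |(r a - r a') - rewardGapError r β θ a a'| := by
        rw [rewardGapError, sub_sub_cancel]
    _ ≤ 1 + B := (abs_sub _ _).trans (add_le_add hr' (hB a a'))

variable [Fintype Y]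

noncomputable def dpoMixPUpdate (r : Y → ℝ) (β : ℝ) (θ : Y → ℝ) (a : Y) : ℝ :=
  θ a + (1 / (β * Fintype.card Y)) * ∑ a' : Y,
    (sig (r a - r a') - sig (β * (θ a - θ a'))) / sig' (β * (θ a - θ a'))

variable {r : Y → ℝ} {β : ℝ}

theorem rewardGapError_dpoMixPUpdate (hβ : β ≠ 0) (θ : Y → ℝ) (a a' : Y) :
    rewardGapError r β (dpoMixPUpdate r β θ) a a' = (Fintype.card Y : ℝ)⁻¹ * ∑ b,
      (newtonResidual (r a - r b) (β * (θ a - θ b)) -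
        newtonResidual (r a' - r b) (β * (θ a' - θ b))) := by
  have : Nonempty Y := ⟨a⟩
  have hcard : (Fintype.card Y : ℝ) ≠ 0 := Nat.cast_ne_zero.2 Fintype.card_ne_zero
  simp only [rewardGapError, dpoMixPUpdate, newtonResidual]
  field_simp
  simp only [sum_sub_distrib, sum_const, card_univ, nsmul_eq_mul, ← mul_sum]
  ring

theorem abs_rewardGapError_dpoMixPUpdate_le (hβ : β ≠ 0) {θ : Y → ℝ} {B V : ℝ}
    (hV : ∀ a a', |β * (θ a - θ a')| ≤ V) (hB : ∀ a a', |rewardGapError r β θ a a'| ≤ B)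
    (a a' : Y) :
    |rewardGapError r β (dpoMixPUpdate r β θ) a a'| ≤ 1 / 10 / sig' V * B ^ 2 := by
  have : Nonempty Y := ⟨a⟩
  have hres (c b : Y) : |newtonResidual (r c - r b) (β * (θ c - θ b))| ≤ 1 / 20 / sig' V * B ^ 2 :=
    abs_newtonResidual_le (hV c b) (hB c b)
  rw [rewardGapError_dpoMixPUpdate hβ, abs_mul, abs_inv, Nat.abs_cast]
  calc _ ≤ (Fintype.card Y : ℝ)⁻¹ * ∑ _b : Y, 1 / 10 / sig' V * B ^ 2 := by
        gcongr
        refine (abs_sum_le_sum_abs _ _).trans (sum_le_sum fun b _ => ?_)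
        exact (abs_sub _ _).trans ((add_le_add (hres a b) (hres a' b)).trans_eq (by ring))
    _ = _ := by
        rw [sum_const, card_univ, nsmul_eq_mul]
        field_simp

theorem abs_rewardGapError_dpoMixPUpdate_zero_le (hr : ∀ a, 0 ≤ r a ∧ r a ≤ 1) (hβ : β ≠ 0)
    (a a' : Y) : |rewardGapError r β (dpoMixPUpdate r β 0) a a'| ≤ 2 / 5 := by
  have hB (a a' : Y) : |rewardGapError r β 0 a a'| ≤ 1 := by
    simpa [rewardGapError] using abs_sub_le_one_of_mem_unit hr a a'
  have := abs_rewardGapError_dpoMixPUpdate_le hβ (V := 0) (by simp) hB a a'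
  rw [sig'_zero] at this
  linarith

theorem abs_rewardGapError_dpoMixPUpdate_le_of_le_two_fifths (hr : ∀ a, 0 ≤ r a ∧ r a ≤ 1)
    (hβ : β ≠ 0) {θ : Y → ℝ} (hB : ∀ a a', |rewardGapError r β θ a a'| ≤ 2 / 5) (a a' : Y) :
    |rewardGapError r β (dpoMixPUpdate r β θ) a a'| ≤ 0.611 ^ 3 :=
  calc _ ≤ 1 / 10 / sig' 2 * (2 / 5) ^ 2 := abs_rewardGapError_dpoMixPUpdate_le hβ
        (fun a a' => (abs_mul_sub_le_one_add hr hB a a').trans (by norm_num)) hB a a'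
    _ ≤ 1 / 10 / (8 / 81) * (2 / 5) ^ 2 := by
        gcongr
        exact le_sig'_two
    _ ≤ 0.611 ^ 3 := by norm_num

theorem abs_rewardGapError_dpoMixPUpdate_le_of_le_quarter (hr : ∀ a, 0 ≤ r a ∧ r a ≤ 1)
    (hβ : β ≠ 0) {θ : Y → ℝ} {B : ℝ} (hB : ∀ a a', |rewardGapError r β θ a a'| ≤ B)
    (hB' : B ≤ 1 / 4) (a a' : Y) :
    |rewardGapError r β (dpoMixPUpdate r β θ) a a'| ≤ 0.611 * B ^ 2 := by
  refine (abs_rewardGapError_dpoMixPUpdate_le hβ (V := 5 / 4)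
    (fun a a' => (abs_mul_sub_le_one_add hr hB a a').trans (by linarith)) hB a a').trans ?_
  gcongr
  calc 1 / 10 / sig' (5 / 4) ≤ 1 / 10 / (14 / 81) :=
        div_le_div_of_nonneg_left (by norm_num) (by norm_num) le_sig'_five_div_four
    _ ≤ 0.611 := by norm_num

end DPOMixP

theorem dpo_mix_p_quadratic_convergence_general
    {Y : Type*} [Fintype Y]
    (A : ℕ) (hA : A = Fintype.card Y)
    (r : Y → ℝ) (hr : ∀ a, 0 ≤ r a ∧ r a ≤ 1)
    (β : ℝ) (hβ : 0 < β)
    (θ : ℕ → Y → ℝ) (hθ0 : θ 0 = 0)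
    (hupd : ∀ t a, θ (t + 1) a = θ t a +
      (1 / (β * A)) * ∑ a' : Y,
        (sig (r a - r a') - sig (β * (θ t a - θ t a'))) /
          sig' (β * (θ t a - θ t a'))) :
    ∀ (T : ℕ) (a a' : Y),
      |r a - r a' - β * (θ T a - θ T a')| ≤ (0.611 : ℝ) ^ (2 ^ T - 1) := by
  subst hA
  have hθ (t : ℕ) : θ (t + 1) = dpoMixPUpdate r β (θ t) := funext (hupd t)
  have h1 (a a' : Y) : |rewardGapError r β (θ 1) a a'| ≤ 2 / 5 := by
    rw [hθ, hθ0]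
    exact abs_rewardGapError_dpoMixPUpdate_zero_le hr hβ.ne' a a'
  have h2 (n : ℕ) (a a' : Y) :
      |rewardGapError r β (θ (n + 2)) a a'| ≤ 0.611 ^ (2 ^ (n + 2) - 1) := by
    induction n generalizing a a' with
    | zero => exact hθ 1 ▸ abs_rewardGapError_dpoMixPUpdate_le_of_le_two_fifths hr hβ.ne' h1 a a'
    | succ n ih =>
      have h3 : 3 ≤ 2 ^ (n + 2) - 1 := by
        have := Nat.pow_le_pow_right two_pos (Nat.le_add_left 2 n)
        omega
      rw [hθ, ← mul_sq_pow_two_pow_sub_one]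
      exact abs_rewardGapError_dpoMixPUpdate_le_of_le_quarter hr hβ.ne' ih
        ((pow_le_pow_of_le_one (by norm_num) (by norm_num) h3).trans (by norm_num)) a a'
  intro T a a'
  match T with
  | 0 => simpa [hθ0] using abs_sub_le_one_of_mem_unit hr a a'
  | 1 => exact (h1 a a').trans (by norm_num)
  | n + 2 => exact h2 n a a'

/-- **Theorem 4 (Upper bound of DPO-Mix-P).**
Under tabular softmax parametrization with uniform reference policy,
rewards in `[0,1]`, initialization `θ⁰ = 0`, and the exact DPO-Mix-P
update with learning rate `η = 1/(β²A)`, the reward-gap errors converge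
quadratically: `|δ(a,a';θ^T)| ≤ 0.611^(2^T - 1)`. -/
theorem dpo_mix_p_quadratic_convergence
    {Y : Type*} [Fintype Y] [Nonempty Y]
    (A : ℕ) (hA : A = Fintype.card Y)
    (r : Y → ℝ) (hr : ∀ a, 0 ≤ r a ∧ r a ≤ 1)
    (β : ℝ) (hβ : 0 < β)
    (θ : ℕ → Y → ℝ) (hθ0 : θ 0 = 0)
    (hupd : ∀ t a, θ (t + 1) a = θ t a +
      (1 / (β * A)) * ∑ a' : Y,
        (sig (r a - r a') - sig (β * (θ t a - θ t a'))) /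
          sig' (β * (θ t a - θ t a'))) :
    ∀ (T : ℕ) (a a' : Y),
      |r a - r a' - β * (θ T a - θ T a')| ≤ (0.611 : ℝ) ^ (2 ^ T - 1) :=
  dpo_mix_p_quadratic_convergence_general A hA r hr β hβ θ hθ0 hupd
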